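/- Every D-degenerate graph G on n vertices admits an ordering v_1,...,v_n of its vertices that is 2D-degenerate (each vertex has at most 2D neighbours preceding it in the order) such that the last ⌈n/(2D+1)^3⌉ vertices in the order form an independent set and all have the same degree d in G for some 0 ≤ d ≤ 2D. -/

import Mathlib

/-!
A `D`-degenerate graph on `n` vertices has at most `D n` edges, so at least `n / (2D+1)` of its
vertices have degree at most `2D`. One of the `2D+1` possible degrees `d` is taken by a
`1/(2D+1)` fraction of those, and greedily picking a vertex with at most `D` neighbours
extracts an independent set from a `1/(D+1)` fraction of that class. Put `⌈n / (2D+1)³⌉` of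
these vertices last and order the rest `D`-degenerately: each of the last vertices has at most
`d ≤ 2D` neighbours in total, in particular before it.
-/

open Finset

lemma Finset.exists_card_le_mul_card_fiber {α β : Type*} [DecidableEq β] {s : Finset α}
    {t : Finset β} {f : α → β} (hf : ∀ a ∈ s, f a ∈ t) (ht : t.Nonempty) :
    ∃ y ∈ t, #s ≤ #t * #{a ∈ s | f a = y} := by
  obtain ⟨y, hy, hmax⟩ := t.exists_max_image (fun y ↦ #{a ∈ s | f a = y}) ht
  exact ⟨y, hy, mul_comm #t _ ▸ card_le_mul_card_image_of_maps_to hf _ hmax⟩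

namespace SimpleGraph

variable {V : Type*} (G : SimpleGraph V) (D : ℕ)

def IsDegenerate : Prop :=
  ∀ s : Finset V, s.Nonempty → ∃ v ∈ s, {w | w ∈ s ∧ G.Adj v w}.ncard ≤ D

def IsDegenerateOrder (L : List V) : Prop :=
  ∀ l₁ v l₂, L = l₁ ++ v :: l₂ → {w | w ∈ l₁ ∧ G.Adj v w}.ncard ≤ D

variable {G D}

lemma ncard_neighborSet_eq_degree [Fintype V] [DecidableRel G.Adj] (v : V) :
    (G.neighborSet v).ncard = G.degree v := by
  rw [← card_neighborSet_eq_degree, Set.ncard_eq_toFinset_card', Set.toFinset_card]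

lemma ncard_setOf_mem_and_adj [DecidableRel G.Adj] (s : Finset V) (v : V) :
    {w | w ∈ s ∧ G.Adj v w}.ncard = #{w ∈ s | G.Adj v w} := by
  rw [← Set.ncard_coe_finset, coe_filter]

lemma sum_card_adj_eq_sum_card_adj_erase [DecidableEq V] [DecidableRel G.Adj]
    {s : Finset V} {v : V} (hv : v ∈ s) :
    ∑ u ∈ s, #{w ∈ s | G.Adj u w} =
      ∑ u ∈ s.erase v, #{w ∈ s.erase v | G.Adj u w} + 2 * #{w ∈ s | G.Adj v w} := by
  have hrow (u : V) : #{w ∈ s | G.Adj u w} =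
      #{w ∈ s.erase v | G.Adj u w} + if G.Adj u v then 1 else 0 := by
    simp_rw [card_filter]
    rw [← add_sum_erase s _ hv, add_comm]
  have hcol : ∑ u ∈ s.erase v, (if G.Adj u v then 1 else 0) = #{w ∈ s | G.Adj v w} := by
    rw [sum_erase _ (by simp), ← card_filter]
    simp_rw [G.adj_comm]
  rw [← add_sum_erase s _ hv, sum_congr rfl fun u _ ↦ hrow u, sum_add_distrib, hcol]
  ring

namespace IsDegenerateOrder

lemma mono {D' : ℕ} {L : List V} (hL : G.IsDegenerateOrder D L) (h : D ≤ D') :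
    G.IsDegenerateOrder D' L :=
  fun l₁ v l₂ hsplit ↦ (hL l₁ v l₂ hsplit).trans h

lemma append {L M : List V} (hL : G.IsDegenerateOrder D L)
    (hM : ∀ m₁ v m₂, M = m₁ ++ v :: m₂ → {w | w ∈ L ++ m₁ ∧ G.Adj v w}.ncard ≤ D) :
    G.IsDegenerateOrder D (L ++ M) := by
  intro l₁ v l₂ hsplit
  obtain ⟨m₁, rfl, hm⟩ | ⟨_ | ⟨x, c⟩, hc, hcM⟩ := List.append_eq_append_iff.mp hsplit
  · exact hM m₁ v l₂ hm
  · simpa [hc] using hM [] v l₂ hcM.symm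
  · obtain ⟨rfl, -⟩ := List.cons_eq_cons.mp hcM
    exact hL l₁ v c hc

lemma append_of_ncard_neighborSet_le [Finite V] {L M : List V} (hL : G.IsDegenerateOrder D L)
    (hM : ∀ v ∈ M, (G.neighborSet v).ncard ≤ D) : G.IsDegenerateOrder D (L ++ M) :=
  hL.append fun m₁ v m₂ hm ↦
    (Set.ncard_le_ncard fun _ hw ↦ hw.2).trans (hM v (by simp [hm]))

lemma exists_equiv_fin {L : List V} (hL : G.IsDegenerateOrder D L) (hnd : L.Nodup)
    (hmem : ∀ v, v ∈ L) {n : ℕ} (hn : L.length = n) :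
    ∃ e : Fin n ≃ V, (∀ i, {j | j < i ∧ G.Adj (e j) (e i)}.ncard ≤ D) ∧
      ∀ (i : Fin n) (m : ℕ), m ≤ i → e i ∈ L.drop m := by
  classical
  subst hn
  set e := hnd.getEquivOfForallMemList L hmem
  have he (i : Fin L.length) : e i = L[(i : ℕ)] := rfl
  refine ⟨e, fun i ↦ ?_, fun i m hm ↦ ?_⟩
  · have hsplit : L = L.take i ++ L[(i : ℕ)] :: L.drop (i + 1) := by
      rw [List.getElem_cons_drop, List.take_append_drop]
    refine le_trans (Set.ncard_le_ncard_of_injOn e ?_ e.injective.injOn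
      ((L.take i).finite_toSet.subset fun _ hw ↦ hw.1)) (hL _ _ _ hsplit)
    rintro j ⟨hji, hadj⟩
    refine ⟨List.mem_take_iff_getElem.mpr ⟨j, by simpa using hji, rfl⟩, hadj.symm⟩
  · rw [List.mem_drop_iff_getElem]
    exact ⟨i - m, by omega, by simp [he, Nat.add_sub_cancel' hm]⟩

end IsDegenerateOrder

namespace IsDegenerate

lemma exists_isDegenerateOrder (hG : G.IsDegenerate D) (s : Finset V) :
    ∃ L : List V, L.Nodup ∧ (∀ v, v ∈ L ↔ v ∈ s) ∧ G.IsDegenerateOrder D L := by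
  classical
  induction s using Finset.strongInduction with
  | H s ih =>
  obtain rfl | hs := s.eq_empty_or_nonempty
  · exact ⟨[], List.nodup_nil, by simp, fun l₁ v l₂ h ↦ by simp at h⟩
  obtain ⟨v, hv, hvD⟩ := hG s hs
  obtain ⟨L, hnd, hmem, hL⟩ := ih (s.erase v) (erase_ssubset hv)
  refine ⟨L ++ [v], ?_, fun w ↦ ?_, hL.append fun m₁ u m₂ hm ↦ ?_⟩
  · exact hnd.append (List.nodup_singleton v) (by simp [hmem])
  · simp only [List.mem_append, hmem, mem_erase, List.mem_singleton]
    by_cases hw : w = v <;> simp [hw, hv]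
  · rcases m₁ with _ | ⟨x, m₁⟩
    swap
    · simp at hm
    obtain ⟨rfl, -⟩ := List.cons_eq_cons.mp hm
    refine le_trans (Set.ncard_le_ncard (t := {w | w ∈ s ∧ G.Adj v w}) (fun w hw ↦ ⟨?_, hw.2⟩)
      (s.finite_toSet.subset fun w hw ↦ hw.1)) hvD
    exact mem_of_mem_erase ((hmem w).mp (by simpa using hw.1))

lemma sum_card_adj_le [DecidableEq V] [DecidableRel G.Adj] (hG : G.IsDegenerate D)
    (s : Finset V) :
    ∑ v ∈ s, #{w ∈ s | G.Adj v w} ≤ 2 * D * #s := by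
  induction s using Finset.strongInduction with
  | H s ih =>
  obtain rfl | hs := s.eq_empty_or_nonempty
  · simp
  obtain ⟨v, hv, hvD⟩ := hG s hs
  rw [ncard_setOf_mem_and_adj] at hvD
  have hrest := ih (s.erase v) (erase_ssubset hv)
  rw [sum_card_adj_eq_sum_card_adj_erase hv, ← card_erase_add_one hv]
  linarith

lemma card_le_mul_card_degree_le [Fintype V] [DecidableRel G.Adj] (hG : G.IsDegenerate D) :
    Fintype.card V ≤ (2 * D + 1) * #{v | G.degree v ≤ 2 * D} := by
  classical
  have hsum : ∑ v, G.degree v ≤ 2 * D * Fintype.card V := by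
    simpa [← card_neighborFinset_eq_degree, neighborFinset_eq_filter] using hG.sum_card_adj_le univ
  have hhigh : #{v | ¬G.degree v ≤ 2 * D} * (2 * D + 1) ≤ ∑ v, G.degree v :=
    calc #{v | ¬G.degree v ≤ 2 * D} * (2 * D + 1)
        ≤ ∑ v ∈ {v | ¬G.degree v ≤ 2 * D}, G.degree v := by
          rw [← smul_eq_mul]
          exact card_nsmul_le_sum _ _ _ fun v hv ↦ by simp only [mem_filter] at hv; omega
      _ ≤ ∑ v, G.degree v := sum_le_sum_of_subset (subset_univ _)
  have hsplit := card_filter_add_card_filter_not (s := univ) fun v ↦ G.degree v ≤ 2 * D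
  rw [card_univ] at hsplit
  nlinarith

lemma exists_isIndepSet_subset (hG : G.IsDegenerate D) (s : Finset V) :
    ∃ I ⊆ s, G.IsIndepSet I ∧ #s ≤ (D + 1) * #I := by
  classical
  induction s using Finset.strongInduction with
  | H s ih =>
  obtain rfl | hs := s.eq_empty_or_nonempty
  · exact ⟨∅, empty_subset _, by simp, by simp⟩
  obtain ⟨v, hv, hvD⟩ := hG s hs
  rw [ncard_setOf_mem_and_adj] at hvD
  set t := s \ insert v {w ∈ s | G.Adj v w}
  have hvt : v ∉ t := by simp [t]
  obtain ⟨I, hIt, hI, hIcard⟩ := ih t (ssubset_iff_of_subset sdiff_subset |>.mpr ⟨v, hv, hvt⟩)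
  refine ⟨insert v I, insert_subset hv (hIt.trans sdiff_subset), ?_, ?_⟩
  · rw [coe_insert, IsIndepSet, Set.pairwise_insert]
    refine ⟨hI, fun w hw _ ↦ ?_⟩
    suffices ¬G.Adj v w from ⟨this, fun h ↦ this h.symm⟩
    intro hadj
    have := hIt hw
    simp only [t, mem_sdiff, mem_insert, mem_filter] at this
    exact this.2 (Or.inr ⟨this.1, hadj⟩)
  · have hst : #s ≤ #t + (D + 1) :=
      card_le_card_sdiff_add_card.trans (by grw [card_insert_le, hvD])
    rw [card_insert_of_notMem fun h ↦ hvt (hIt h)]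
    linarith

lemma exists_isIndepSet_degree_eq [Fintype V] [DecidableRel G.Adj] (hG : G.IsDegenerate D) :
    ∃ d ≤ 2 * D, ∃ I : Finset V, G.IsIndepSet I ∧ (∀ v ∈ I, G.degree v = d) ∧
      Fintype.card V ≤ (2 * D + 1) ^ 3 * #I := by
  classical
  set A : Finset V := {v | G.degree v ≤ 2 * D}
  obtain ⟨d, hd, hAd⟩ := exists_card_le_mul_card_fiber (s := A) (t := range (2 * D + 1))
    (f := fun v ↦ G.degree v) (fun v hv ↦ by simp only [A, mem_filter, mem_range] at hv ⊢; omega)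
    nonempty_range_add_one
  obtain ⟨I, hIA, hI, hIcard⟩ := hG.exists_isIndepSet_subset {v ∈ A | G.degree v = d}
  refine ⟨d, by rw [mem_range] at hd; omega, I, hI, fun v hv ↦ (mem_filter.mp (hIA hv)).2, ?_⟩
  rw [card_range] at hAd
  calc Fintype.card V ≤ (2 * D + 1) * #A := hG.card_le_mul_card_degree_le
    _ ≤ (2 * D + 1) * ((2 * D + 1) * ((D + 1) * #I)) := by grw [hAd, hIcard]
    _ ≤ (2 * D + 1) * ((2 * D + 1) * ((2 * D + 1) * #I)) := by gcongr; omega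
    _ = (2 * D + 1) ^ 3 * #I := by ring

lemma exists_isDegenerateOrder_append [Fintype V] (hG : G.IsDegenerate D) {D' : ℕ} (hD : D ≤ D')
    (T : Finset V) (hT : ∀ v ∈ T, (G.neighborSet v).ncard ≤ D') :
    ∃ L : List V, (L ++ T.toList).Nodup ∧ (∀ v, v ∈ L ++ T.toList) ∧
      (L ++ T.toList).length = Fintype.card V ∧ G.IsDegenerateOrder D' (L ++ T.toList) := by
  classical
  obtain ⟨L, hL, hLmem, hord⟩ := hG.exists_isDegenerateOrder Tᶜ
  have hnd : (L ++ T.toList).Nodup :=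
    hL.append T.nodup_toList fun v hvL hvT ↦ by simp_all
  have hmem (v : V) : v ∈ L ++ T.toList := by by_cases v ∈ T <;> simp_all
  refine ⟨L, hnd, hmem, ?_, (hord.mono hD).append_of_ncard_neighborSet_le
    fun v hv ↦ hT v (mem_toList.mp hv)⟩
  rw [← List.toFinset_card_of_nodup hnd,
    eq_univ_of_forall fun v ↦ List.mem_toFinset.mpr (hmem v), card_univ]

end IsDegenerate

end SimpleGraph

open SimpleGraph

/-- Every `D`-degenerate graph on `n` vertices has a `2D`-degenerate ordering
(each vertex has at most `2D` neighbours preceding it) in which the last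
`⌈n / (2D+1)³⌉` vertices form an independent set and all have the same degree `d ≤ 2D`.
The ordering is given by an equiv `e : Fin n ≃ Fin n`, with `e i` the `i`-th vertex. -/
theorem degenerate_reorder (D n : ℕ) (G : SimpleGraph (Fin n))
    (hdeg : ∀ s : Finset (Fin n), s.Nonempty →
      ∃ v ∈ s, ({w : Fin n | w ∈ s ∧ G.Adj v w}).ncard ≤ D) :
    ∃ d ≤ 2 * D, ∃ e : Fin n ≃ Fin n,
      (∀ i : Fin n, ({j : Fin n | j < i ∧ G.Adj (e j) (e i)}).ncard ≤ 2 * D) ∧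
      (∀ i : Fin n, n - ⌈(n : ℝ) / (2 * (D : ℝ) + 1) ^ 3⌉₊ ≤ (i : ℕ) →
        (G.neighborSet (e i)).ncard = d) ∧
      (∀ i j : Fin n, n - ⌈(n : ℝ) / (2 * (D : ℝ) + 1) ^ 3⌉₊ ≤ (i : ℕ) →
        n - ⌈(n : ℝ) / (2 * (D : ℝ) + 1) ^ 3⌉₊ ≤ (j : ℕ) → ¬ G.Adj (e i) (e j)) := by
  classical
  set k := ⌈(n : ℝ) / (2 * (D : ℝ) + 1) ^ 3⌉₊
  obtain ⟨d, hd, I, hI, hIdeg, hIcard⟩ := IsDegenerate.exists_isIndepSet_degree_eq hdeg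
  have hkI : k ≤ #I := by
    have : (n : ℝ) ≤ ((2 * D + 1) ^ 3 * #I : ℕ) := by exact_mod_cast Fintype.card_fin n ▸ hIcard
    rw [Nat.ceil_le, div_le_iff₀ (by positivity)]
    push_cast at this
    linarith
  obtain ⟨T, hTI, hTk⟩ := exists_subset_card_eq hkI
  have hTdeg (v : Fin n) (hv : v ∈ T) : (G.neighborSet v).ncard = d := by
    rw [ncard_neighborSet_eq_degree, hIdeg v (hTI hv)]
  obtain ⟨L, hnd, hmem, hlen, hord⟩ := IsDegenerate.exists_isDegenerateOrder_append hdeg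
    (by omega : D ≤ 2 * D) T fun v hv ↦ (hTdeg v hv).trans_le hd
  obtain ⟨e, he, htail⟩ := hord.exists_equiv_fin hnd hmem (hlen.trans (Fintype.card_fin n))
  have heT (i : Fin n) (hi : n - k ≤ i) : e i ∈ T := by
    have hL : L.length = n - k := by
      simp only [List.length_append, length_toList, Fintype.card_fin] at hlen
      omega
    simpa [List.drop_left' hL] using htail i (n - k) hi
  refine ⟨d, hd, e, he, fun i hi ↦ hTdeg _ (heT i hi), fun i j hi hj hadj ↦ ?_⟩
  exact hI (hTI (heT i hi)) (hTI (heT j hj)) hadj.ne hadj
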